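/- arXiv:2512.21062 — 2 statements merged into one kernel-verified Lean document; each statement's English description precedes it below -/
import Mathlib

section
/- For every word w, all i, j ∈ {1,…,n}, every l₀ ∈ {1,…,r_i} and every m₀ ∈ {1,…,r_j}: C^g(w)_{ij} = Σ_{l=1}^{r_i} C^c(w)_{(i,l),(j,m₀)}; r_j · C^g(w)_{ij} = r_i · Σ_{m=1}^{r_j} C^c(w)_{(i,l₀),(j,m)}; and C^g(w)_{ij} = r_i · ( C^c(w)_{(i,l₀),(j,m₀)} − σ_{j;w}δ_{(i,l₀),(j,m₀)} ) + σ_{j;w}δ_{ij}, where δ denotes the Kronecker delta. -/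
/-- `[x]₊ = max(x,0)`. -/
def intPos (x : ℤ) : ℤ := max x 0

/-- The index set `D = {(i,l) : 1 ≤ i ≤ n, 1 ≤ l ≤ r i}`. -/
abbrev DIdx (n : ℕ) (r : Fin n → ℕ) := Σ i : Fin n, Fin (r i)

/-- Ordinary matrix mutation of a `D × D` integer matrix in direction `p`. -/
def matMut {n : ℕ} {r : Fin n → ℕ} (M : DIdx n r → DIdx n r → ℤ) (p : DIdx n r) :
    DIdx n r → DIdx n r → ℤ :=
  fun d e =>
    if d = p ∨ e = p then -M d e
    else M d e + M d p * intPos (M p e) + intPos (-(M d p)) * M p e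

/-- Generalized matrix mutation `μ^r_k` of an `n × n` integer matrix. -/
def genMut {n : ℕ} (r : Fin n → ℕ) (B : Matrix (Fin n) (Fin n) ℤ) (k : Fin n) :
    Matrix (Fin n) (Fin n) ℤ :=
  Matrix.of fun i j =>
    if i = k ∨ j = k then -B i j
    else B i j + (r k : ℤ) * (B i k * intPos (B k j) + intPos (-(B i k)) * B k j)

/-- The enlargement of an `n × n` integer matrix `B`. -/
def enlarge {n : ℕ} (r : Fin n → ℕ) (B : Matrix (Fin n) (Fin n) ℤ) :
    DIdx n r → DIdx n r → ℤ :=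
  fun d e => B d.1 e.1

/-- The identity `D × D` matrix. -/
def idMat {n : ℕ} {r : Fin n → ℕ} : DIdx n r → DIdx n r → ℤ :=
  fun d e => if d = e then 1 else 0

/-- One mutation step for the triple `(B̂, Ĉ, Ĝ)` in direction `p ∈ D`; `E0 = B̂(∅)`. -/
def hatStep {n : ℕ} {r : Fin n → ℕ} (E0 : DIdx n r → DIdx n r → ℤ)
    (st : (DIdx n r → DIdx n r → ℤ) × (DIdx n r → DIdx n r → ℤ) × (DIdx n r → DIdx n r → ℤ))
    (p : DIdx n r) :
    (DIdx n r → DIdx n r → ℤ) × (DIdx n r → DIdx n r → ℤ) × (DIdx n r → DIdx n r → ℤ) :=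
  (matMut st.1 p,
   fun d e =>
     if e = p then -(st.2.1 d p)
     else st.2.1 d e + st.2.1 d p * intPos (st.1 p e) + intPos (-(st.2.1 d p)) * st.1 p e,
   fun d e =>
     if e = p then
       -(st.2.2 d p) + ∑ a : DIdx n r,
         (st.2.2 d a * intPos (-(st.1 a p)) - E0 d a * intPos (-(st.2.1 a p)))
     else st.2.2 d e)

/-- The triple `(B̂(v), Ĉ(v), Ĝ(v))` attached to a word `v` over `D`. -/
def hatPat {n : ℕ} (r : Fin n → ℕ) (B₀ : Matrix (Fin n) (Fin n) ℤ) (v : List (DIdx n r)) :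
    (DIdx n r → DIdx n r → ℤ) × (DIdx n r → DIdx n r → ℤ) × (DIdx n r → DIdx n r → ℤ) :=
  v.foldl (hatStep (enlarge r B₀)) (enlarge r B₀, idMat, idMat)

/-- `expand w`: replace each letter `k` of `w` by `(k,1), (k,2), …, (k,r_k)`. -/
def expandWord {n : ℕ} (r : Fin n → ℕ) (w : List (Fin n)) : List (DIdx n r) :=
  w.flatMap fun k => (List.finRange (r k)).map fun l => ⟨k, l⟩

/-- The composite matrices `B^c(w) = B̂(expand w)`, `C^c(w) = Ĉ(expand w)`,
`G^c(w) = Ĝ(expand w)`. -/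
def Bc {n : ℕ} (r : Fin n → ℕ) (B₀ : Matrix (Fin n) (Fin n) ℤ) (w : List (Fin n)) :
    DIdx n r → DIdx n r → ℤ := (hatPat r B₀ (expandWord r w)).1

def Cc {n : ℕ} (r : Fin n → ℕ) (B₀ : Matrix (Fin n) (Fin n) ℤ) (w : List (Fin n)) :
    DIdx n r → DIdx n r → ℤ := (hatPat r B₀ (expandWord r w)).2.1

def Gc {n : ℕ} (r : Fin n → ℕ) (B₀ : Matrix (Fin n) (Fin n) ℤ) (w : List (Fin n)) :
    DIdx n r → DIdx n r → ℤ := (hatPat r B₀ (expandWord r w)).2.2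

/-- One mutation step for the triple `(B, C^g, G^g)` in direction `k ∈ {1,…,n}`. -/
def genStep {n : ℕ} (r : Fin n → ℕ) (B₀ : Matrix (Fin n) (Fin n) ℤ)
    (st : Matrix (Fin n) (Fin n) ℤ × Matrix (Fin n) (Fin n) ℤ × Matrix (Fin n) (Fin n) ℤ)
    (k : Fin n) :
    Matrix (Fin n) (Fin n) ℤ × Matrix (Fin n) (Fin n) ℤ × Matrix (Fin n) (Fin n) ℤ :=
  (genMut r st.1 k,
   Matrix.of fun i j =>
     if j = k then -(st.2.1 i k)
     else st.2.1 i j + (r k : ℤ) * (st.2.1 i k * intPos (st.1 k j)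
       + intPos (-(st.2.1 i k)) * st.1 k j),
   Matrix.of fun i j =>
     if j = k then
       -(st.2.2 i k) + (r k : ℤ) * ∑ a : Fin n,
         (st.2.2 i a * intPos (-(st.1 a k)) - B₀ i a * intPos (-(st.2.1 a k)))
     else st.2.2 i j)

/-- The triple `(B(w), C^g(w), G^g(w))` attached to a word `w` over `{1,…,n}`. -/
def genPat {n : ℕ} (r : Fin n → ℕ) (B₀ : Matrix (Fin n) (Fin n) ℤ) (w : List (Fin n)) :
    Matrix (Fin n) (Fin n) ℤ × Matrix (Fin n) (Fin n) ℤ × Matrix (Fin n) (Fin n) ℤ :=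
  w.foldl (genStep r B₀) (B₀, 1, 1)

/-- The sign `σ_{j;w} = (−1)^{number of occurrences of j in w}`. -/
def sigmaSign {n : ℕ} (w : List (Fin n)) (j : Fin n) : ℤ := (-1) ^ (w.count j)

/-- The Kronecker delta on `D`. -/
def deltaD {n : ℕ} {r : Fin n → ℕ} (d e : DIdx n r) : ℤ := if d = e then 1 else 0

section Aux

lemma intPos_of_nonneg {x : ℤ} (h : 0 ≤ x) : intPos x = x := max_eq_left h
lemma intPos_of_nonpos {x : ℤ} (h : x ≤ 0) : intPos x = 0 := max_eq_right h
@[simp] lemma intPos_zero : intPos 0 = 0 := rfl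

lemma intPos_mul_nonneg (c x : ℤ) (hc : 0 ≤ c) : intPos (c * x) = c * intPos x := by
  unfold intPos
  rcases le_or_gt 0 x with h | h
  · rw [max_eq_left (mul_nonneg hc h), max_eq_left h]
  · rw [max_eq_right (mul_nonpos_of_nonneg_of_nonpos hc h.le), max_eq_right h.le, mul_zero]

/-- The elementary mutation contribution `f(x) = x·[b]₊ + [−x]₊·b`. -/
def fE (b x : ℤ) : ℤ := x * intPos b + intPos (-x) * b

@[simp] lemma fE_zero (b : ℤ) : fE b 0 = 0 := by simp [fE]

lemma fE_of_nonneg {x : ℤ} (h : 0 ≤ x) (b : ℤ) : fE b x = x * intPos b := by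
  simp [fE, intPos_of_nonpos (neg_nonpos.2 h)]

lemma fE_of_nonpos {x : ℤ} (h : x ≤ 0) (b : ℤ) : fE b x = x * (intPos b - b) := by
  rw [fE, intPos_of_nonneg (neg_nonneg.2 h)]; ring

lemma fE_mul (b c x : ℤ) (hc : 0 ≤ c) : fE b (c * x) = c * fE b x := by
  rcases le_or_gt 0 x with h | h
  · rw [fE_of_nonneg h, fE_of_nonneg (mul_nonneg hc h)]; ring
  · rw [fE_of_nonpos h.le, fE_of_nonpos (mul_nonpos_of_nonneg_of_nonpos hc h.le)]; ring

lemma fE_key (b γ σ : ℤ) (hσ : σ = 1 ∨ σ = -1) (m : ℕ) :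
    fE b ((m : ℤ) * γ + (γ + σ)) = (m : ℤ) * fE b γ + fE b (γ + σ) := by
  rcases lt_trichotomy γ 0 with h | h | h
  · have h1 : γ + σ ≤ 0 := by rcases hσ with rfl | rfl <;> omega
    have h2 : (m : ℤ) * γ + (γ + σ) ≤ 0 := by
      have : (m : ℤ) * γ ≤ 0 := mul_nonpos_of_nonneg_of_nonpos (Int.natCast_nonneg m) h.le
      omega
    rw [fE_of_nonpos h1, fE_of_nonpos h2, fE_of_nonpos h.le]; ring
  · subst h; simp
  · have h1 : 0 ≤ γ + σ := by rcases hσ with rfl | rfl <;> omega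
    have h2 : 0 ≤ (m : ℤ) * γ + (γ + σ) := by
      have : 0 ≤ (m : ℤ) * γ := mul_nonneg (Int.natCast_nonneg m) h.le
      omega
    rw [fE_of_nonneg h1, fE_of_nonneg h2, fE_of_nonneg h.le]; ring

lemma sigmaSign_pm {n : ℕ} (w : List (Fin n)) (j : Fin n) :
    sigmaSign w j = 1 ∨ sigmaSign w j = -1 := by
  rcases Nat.even_or_odd (w.count j) with h | h
  · left; simp [sigmaSign, h.neg_one_pow]
  · right; simp [sigmaSign, h.neg_one_pow]

end Aux
section Inv
variable {n : ℕ} {r : Fin n → ℕ}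

@[simp] lemma fE_b_zero (x : ℤ) : fE 0 x = 0 := by simp [fE]

/-- Invariant for the `B̂` component during mutation of one block. -/
def InvM (k : Fin n) (b : Matrix (Fin n) (Fin n) ℤ) (S : Finset (DIdx n r))
    (M : DIdx n r → DIdx n r → ℤ) : Prop :=
  ∀ d e : DIdx n r, M d e =
    if (d ∈ S ↔ e ∈ S) then b d.1 e.1 + (S.card : ℤ) * fE (b k e.1) (b d.1 k)
    else -(b d.1 e.1)

/-- Invariant for the `Ĉ` component during mutation of one block. -/
def InvC (k : Fin n) (b γ : Matrix (Fin n) (Fin n) ℤ) (σ : Fin n → ℤ)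
    (S : Finset (DIdx n r)) (C : DIdx n r → DIdx n r → ℤ) : Prop :=
  ∀ d e : DIdx n r, C d e =
    if e.1 = k then (if e ∈ S then (-1 : ℤ) else 1) * (γ d.1 k + σ k * deltaD d e)
    else γ d.1 e.1 + σ e.1 * deltaD d e +
      (if d ∈ S then ((S.card : ℤ) - 1) * fE (b k e.1) (γ k k) + fE (b k e.1) (γ k k + σ k)
       else (S.card : ℤ) * fE (b k e.1) (γ d.1 k))

lemma step_inv {k : Fin n} {b γ : Matrix (Fin n) (Fin n) ℤ} {σ : Fin n → ℤ}
    (hb : b k k = 0) {S : Finset (DIdx n r)} (hS : ∀ d ∈ S, d.1 = k)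
    {p : DIdx n r} (hp : p.1 = k) (hpS : p ∉ S)
    {M C : DIdx n r → DIdx n r → ℤ}
    (hM : InvM k b S M) (hC : InvC k b γ σ S C) :
    InvM k b (insert p S) (matMut M p) ∧
    InvC k b γ σ (insert p S)
      (fun d e => if e = p then -(C d p)
        else C d e + C d p * intPos (M p e) + intPos (-(C d p)) * M p e) := by
  have hfk : ∀ x : ℤ, fE (b k k) x = 0 := by intro x; rw [hb]; simp
  have hMpe : ∀ e, M p e = if e ∈ S then -(b k e.1) else b k e.1 := by
    intro e; rw [hM p e, hp]
    by_cases he : e ∈ S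
    · simp [he, hpS]
    · simp [he, hpS, hb]
  have hMdp : ∀ d, M d p = if d ∈ S then -(b d.1 k) else b d.1 k := by
    intro d; rw [hM d p]
    by_cases hd : d ∈ S
    · simp [hd, hpS, hp]
    · simp [hd, hpS, hp, hfk]
  have hCdp : ∀ d, C d p = γ d.1 k + σ k * deltaD d p := by
    intro d; rw [hC d p]; simp [hp, hpS]
  have hcard : ((insert p S).card : ℤ) = (S.card : ℤ) + 1 := by
    rw [Finset.card_insert_of_notMem hpS]; push_cast; ring
  have hpI : p ∈ insert p S := Finset.mem_insert_self p S
  constructor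
  · intro d e
    unfold matMut
    by_cases hd : d = p
    · by_cases he : e = p
      · rw [if_pos (Or.inl hd), hd, he, if_pos Iff.rfl, hMpe p, if_neg hpS, hp, hb]
        simp
      · rw [if_pos (Or.inl hd), hd, hMpe e]
        by_cases heS : e ∈ S
        · have heI : e ∈ insert p S := Finset.mem_insert_of_mem heS
          rw [if_pos heS, if_pos (iff_of_true hpI heI), hp, hb]
          simp
        · have heI : e ∉ insert p S := by simp [Finset.mem_insert, he, heS]
          rw [if_neg heS, if_neg (fun h => heI (h.mp hpI)), hp]
    · by_cases he : e = p
      · rw [if_pos (Or.inr he), he, hMdp d]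
        by_cases hdS : d ∈ S
        · have hdI : d ∈ insert p S := Finset.mem_insert_of_mem hdS
          rw [if_pos hdS, if_pos (iff_of_true hdI hpI), hp, hb]
          simp
        · have hdI : d ∉ insert p S := by simp [Finset.mem_insert, hd, hdS]
          rw [if_neg hdS, if_neg (fun h => hdI (h.mpr hpI)), hp]
      · rw [if_neg (by tauto), hM d e, hMdp d, hMpe e]
        by_cases hdS : d ∈ S <;> by_cases heS : e ∈ S
        · have hd1 := hS d hdS; have he1 := hS e heS
          have hdI : d ∈ insert p S := Finset.mem_insert_of_mem hdS
          have heI : e ∈ insert p S := Finset.mem_insert_of_mem heS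
          rw [if_pos hdS, if_pos heS, if_pos (iff_of_true hdS heS),
            if_pos (iff_of_true hdI heI), hd1, he1, hb]
          simp
        · have hd1 := hS d hdS
          have hdI : d ∈ insert p S := Finset.mem_insert_of_mem hdS
          have heI : e ∉ insert p S := by simp [Finset.mem_insert, he, heS]
          rw [if_pos hdS, if_neg heS, if_neg (fun h => heS (h.mp hdS)),
            if_neg (fun h => heI (h.mp hdI)), hd1, hb]
          simp
        · have he1 := hS e heS
          have heI : e ∈ insert p S := Finset.mem_insert_of_mem heS
          have hdI : d ∉ insert p S := by simp [Finset.mem_insert, hd, hdS]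
          rw [if_neg hdS, if_pos heS, if_neg (fun h => hdS (h.mpr heS)),
            if_neg (fun h => hdI (h.mpr heI)), he1, hb]
          simp
        · have hdI : d ∉ insert p S := by simp [Finset.mem_insert, hd, hdS]
          have heI : e ∉ insert p S := by simp [Finset.mem_insert, he, heS]
          rw [if_neg hdS, if_neg heS, if_pos (iff_of_false hdS heS),
            if_pos (iff_of_false hdI heI), hcard]
          simp only [fE]
          push_cast
          ring
  · intro d e
    simp only []
    by_cases he : e = p
    · rw [if_pos he, hCdp d, he, hp, if_pos rfl, if_pos hpI]
      ring
    · rw [if_neg he, hCdp d, hMpe e, hC d e]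
      by_cases he1 : e.1 = k
      · have heI : (e ∈ insert p S) ↔ (e ∈ S) := by simp [Finset.mem_insert, he]
        rw [if_pos he1, if_pos he1, he1, hb]
        by_cases heS : e ∈ S
        · rw [if_pos heS, if_pos (heI.mpr heS), if_pos heS]
          simp
        · rw [if_neg heS, if_neg (fun h => heS (heI.mp h)), if_neg heS]
          simp
      · have heS : e ∉ S := fun h => he1 (hS e h)
        rw [if_neg he1, if_neg he1, if_neg heS]
        by_cases hdp : d = p
        · have hdI : d ∈ insert p S := by rw [hdp]; exact hpI
          have hdS : d ∉ S := by rw [hdp]; exact hpS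
          have h1 : deltaD d p = 1 := by rw [hdp]; simp [deltaD]
          rw [if_pos hdI, if_neg hdS, h1, mul_one, hcard, hdp, hp]
          simp only [fE]
          ring
        · have h0 : deltaD d p = 0 := by simp [deltaD, hdp]
          rw [h0, mul_zero, add_zero]
          by_cases hdS : d ∈ S
          · have hd1 := hS d hdS
            have hdI : d ∈ insert p S := Finset.mem_insert_of_mem hdS
            rw [if_pos hdS, if_pos hdI, hcard, hd1]
            simp only [fE]
            ring
          · have hdI : d ∉ insert p S := by simp [Finset.mem_insert, hdp, hdS]
            rw [if_neg hdS, if_neg hdI, hcard]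
            simp only [fE]
            ring
end Inv
section Fold
variable {n : ℕ} {r : Fin n → ℕ}

lemma fold_inv {k : Fin n} {b γ : Matrix (Fin n) (Fin n) ℤ} {σ : Fin n → ℤ}
    (hb : b k k = 0) (E0 : DIdx n r → DIdx n r → ℤ) :
    ∀ (L : List (DIdx n r)) (S : Finset (DIdx n r))
      (st : (DIdx n r → DIdx n r → ℤ) × (DIdx n r → DIdx n r → ℤ) × (DIdx n r → DIdx n r → ℤ)),
      L.Nodup → (∀ p ∈ L, p.1 = k) → (∀ p ∈ L, p ∉ S) → (∀ d ∈ S, d.1 = k) →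
      InvM k b S st.1 → InvC k b γ σ S st.2.1 →
      InvM k b (S ∪ L.toFinset) (L.foldl (hatStep E0) st).1 ∧
      InvC k b γ σ (S ∪ L.toFinset) (L.foldl (hatStep E0) st).2.1
  | [], S, st, _, _, _, _, hM, hC => by simpa using ⟨hM, hC⟩
  | p :: L, S, st, hnd, hk, hnotS, hS, hM, hC => by
      have hp : p.1 = k := hk p List.mem_cons_self
      have hpS : p ∉ S := hnotS p List.mem_cons_self
      obtain ⟨hM', hC'⟩ := step_inv hb hS hp hpS hM hC
      have hres := fold_inv hb E0 L (insert p S) (hatStep E0 st p)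
        (List.nodup_cons.mp hnd).2
        (fun q hq => hk q (List.mem_cons_of_mem p hq))
        (fun q hq h => by
          rcases Finset.mem_insert.mp h with h' | h'
          · exact (List.nodup_cons.mp hnd).1 (h' ▸ hq)
          · exact hnotS q (List.mem_cons_of_mem p hq) h')
        (fun d hd => by
          rcases Finset.mem_insert.mp hd with h | h
          · rw [h]; exact hp
          · exact hS d h)
        hM' hC'
      rw [List.foldl_cons]
      have hset : insert p S ∪ L.toFinset = S ∪ (p :: L).toFinset := by
        simp [List.toFinset_cons, Finset.union_insert]
      rw [← hset]
      exact hres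
end Fold

section Skew
variable {n : ℕ}

/-- Skew-symmetrizability. -/
def Skew (b : Matrix (Fin n) (Fin n) ℤ) : Prop :=
  ∃ d : Fin n → ℚ, (∀ i, 0 < d i) ∧ ∀ i j, d i * (b i j : ℚ) = -(d j * (b j i : ℚ))

lemma Skew.diag {b : Matrix (Fin n) (Fin n) ℤ} (h : Skew b) (k : Fin n) : b k k = 0 := by
  obtain ⟨d, hd, hrel⟩ := h
  have h1 := hrel k k
  have h2 : (b k k : ℚ) = 0 := by
    rcases mul_eq_zero.mp (show d k * (b k k : ℚ) = 0 by linarith) with h | h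
    · exact absurd h (ne_of_gt (hd k))
    · exact h
  exact_mod_cast h2

lemma opp_sign {a c : ℚ} {x y : ℤ} (ha : 0 < a) (hc : 0 < c)
    (h : a * (x : ℚ) = -(c * (y : ℚ))) : (0 ≤ x → y ≤ 0) ∧ (x < 0 → 0 < y) := by
  constructor
  · intro hx
    by_contra hy; push_neg at hy
    have hx' : (0 : ℚ) ≤ (x : ℚ) := by exact_mod_cast hx
    have hy' : (0 : ℚ) < (y : ℚ) := by exact_mod_cast hy
    nlinarith
  · intro hx
    by_contra hy; push_neg at hy
    have hx' : ((x : ℚ)) < 0 := by exact_mod_cast hx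
    have hy' : ((y : ℚ)) ≤ 0 := by exact_mod_cast hy
    nlinarith

lemma skew_genMut {b : Matrix (Fin n) (Fin n) ℤ} (h : Skew b) (r : Fin n → ℕ) (k : Fin n) :
    Skew (genMut r b k) := by
  obtain ⟨d, hd, hrel⟩ := h
  refine ⟨d, hd, fun i j => ?_⟩
  by_cases hik : i = k
  · have e1 : genMut r b k i j = -(b i j) := by simp [genMut, hik]
    have e2 : genMut r b k j i = -(b j i) := by simp [genMut, hik]
    rw [e1, e2]
    push_cast
    linarith [hrel i j]
  · by_cases hjk : j = k
    · have e1 : genMut r b k i j = -(b i j) := by simp [genMut, hjk]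
      have e2 : genMut r b k j i = -(b j i) := by simp [genMut, hjk]
      rw [e1, e2]
      push_cast
      linarith [hrel i j]
    · have e1 : genMut r b k i j
          = b i j + (r k : ℤ) * (b i k * intPos (b k j) + intPos (-(b i k)) * b k j) := by
        simp [genMut, hik, hjk]
      have e2 : genMut r b k j i
          = b j i + (r k : ℤ) * (b j k * intPos (b k i) + intPos (-(b j k)) * b k i) := by
        simp [genMut, hik, hjk]
      rw [e1, e2]
      have h0 := hrel i j
      have h1 := hrel i k
      have h2 := hrel k j
      have key : d i * (b i k : ℚ) * (b k j : ℚ) = d j * (b j k : ℚ) * (b k i : ℚ) := by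
        have hcalc : d k * (d i * (b i k : ℚ) * (b k j : ℚ))
            = d k * (d j * (b j k : ℚ) * (b k i : ℚ)) := by
          calc d k * (d i * (b i k : ℚ) * (b k j : ℚ))
              = (d i * (b i k : ℚ)) * (d k * (b k j : ℚ)) := by ring
            _ = (-(d k * (b k i : ℚ))) * (-(d j * (b j k : ℚ))) := by rw [h1, h2]
            _ = d k * (d j * (b j k : ℚ) * (b k i : ℚ)) := by ring
        exact mul_left_cancel₀ (ne_of_gt (hd k)) hcalc
      obtain ⟨hs1, hs2⟩ := opp_sign (hd i) (hd k) h1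
      obtain ⟨hs3, hs4⟩ := opp_sign (hd k) (hd j) h2
      rcases le_or_gt 0 (b i k) with hx | hx <;> rcases le_or_gt 0 (b k j) with hy | hy
      · rw [intPos_of_nonneg hy, intPos_of_nonpos (by linarith [hx] : -(b i k) ≤ 0),
          intPos_of_nonpos (hs1 hx), intPos_of_nonneg (by linarith [hs3 hy] : 0 ≤ -(b j k))]
        push_cast
        linear_combination h0 + (r k : ℚ) * key
      · rw [intPos_of_nonpos hy.le, intPos_of_nonpos (by linarith [hx] : -(b i k) ≤ 0),
          intPos_of_nonpos (hs1 hx), intPos_of_nonpos (by linarith [hs4 hy] : -(b j k) ≤ 0)]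
        push_cast
        linear_combination h0
      · rw [intPos_of_nonneg hy, intPos_of_nonneg (by linarith [hx] : 0 ≤ -(b i k)),
          intPos_of_nonneg (by linarith [hs2 hx] : 0 ≤ b k i),
          intPos_of_nonneg (by linarith [hs3 hy] : 0 ≤ -(b j k))]
        push_cast
        linear_combination h0
      · rw [intPos_of_nonpos hy.le, intPos_of_nonneg (by linarith [hx] : 0 ≤ -(b i k)),
          intPos_of_nonneg (by linarith [hs2 hx] : 0 ≤ b k i),
          intPos_of_nonpos (by linarith [hs4 hy] : -(b j k) ≤ 0)]
        push_cast
        linear_combination h0 - (r k : ℚ) * key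
end Skew
section Outer
variable {n : ℕ} {r : Fin n → ℕ}

/-- The block of composite indices lying over `k`. -/
def blockL (k : Fin n) : List (DIdx n r) := (List.finRange (r k)).map fun l => ⟨k, l⟩

lemma blockL_nodup (k : Fin n) : (blockL (r := r) k).Nodup :=
  (List.nodup_finRange _).map (fun l₁ l₂ h => by simpa using h)

lemma blockL_mem (k : Fin n) (d : DIdx n r) : d ∈ (blockL (r := r) k).toFinset ↔ d.1 = k := by
  obtain ⟨i, l⟩ := d
  simp only [blockL, List.mem_toFinset, List.mem_map, List.mem_finRange]
  constructor
  · rintro ⟨a, -, ha⟩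
    exact (congrArg Sigma.fst ha).symm
  · rintro rfl
    exact ⟨l, trivial, rfl⟩

lemma blockL_card (k : Fin n) : (((blockL (r := r) k).toFinset.card : ℤ)) = (r k : ℤ) := by
  rw [List.toFinset_card_of_nodup (blockL_nodup k)]
  simp [blockL]

lemma genPat_append (r : Fin n → ℕ) (B₀ : Matrix (Fin n) (Fin n) ℤ) (w : List (Fin n))
    (k : Fin n) : genPat r B₀ (w ++ [k]) = genStep r B₀ (genPat r B₀ w) k := by
  simp [genPat, List.foldl_append]

lemma hatPat_append (r : Fin n → ℕ) (B₀ : Matrix (Fin n) (Fin n) ℤ) (v L : List (DIdx n r)) :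
    hatPat r B₀ (v ++ L) = L.foldl (hatStep (enlarge r B₀)) (hatPat r B₀ v) := by
  simp [hatPat, List.foldl_append]

lemma expandWord_append (r : Fin n → ℕ) (w : List (Fin n)) (k : Fin n) :
    expandWord r (w ++ [k]) = expandWord r w ++ blockL k := by
  simp [expandWord, blockL]

lemma sigmaSign_append (w : List (Fin n)) (k j : Fin n) :
    sigmaSign (w ++ [k]) j = (if j = k then (-1 : ℤ) else 1) * sigmaSign w j := by
  rcases eq_or_ne j k with rfl | hne
  · simp [sigmaSign, List.count_append, pow_succ]
  · simp [sigmaSign, List.count_append, List.count_singleton', hne, hne.symm]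

lemma fE_def' (B x : ℤ) : x * intPos B + intPos (-x) * B = fE B x := rfl

lemma main_inv (r : Fin n → ℕ) (hr : ∀ i, 1 ≤ r i) (B₀ : Matrix (Fin n) (Fin n) ℤ)
    (hskew : Skew B₀) (w : List (Fin n)) :
    Skew ((genPat r B₀ w).1) ∧
    ∃ γ : Matrix (Fin n) (Fin n) ℤ,
      (∀ d e : DIdx n r, (hatPat r B₀ (expandWord r w)).1 d e = (genPat r B₀ w).1 d.1 e.1) ∧
      (∀ d e : DIdx n r, (hatPat r B₀ (expandWord r w)).2.1 d e
          = γ d.1 e.1 + sigmaSign w e.1 * deltaD d e) ∧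
      (∀ i j : Fin n, (genPat r B₀ w).2.1 i j
          = (r i : ℤ) * γ i j + sigmaSign w j * (if i = j then 1 else 0)) := by
  induction w using List.reverseRecOn with
  | nil =>
      refine ⟨hskew, 0, fun d e => rfl, ?_, ?_⟩
      · intro d e; simp [hatPat, expandWord, idMat, deltaD, sigmaSign]
      · intro i j; simp [genPat, sigmaSign, Matrix.one_apply]
  | append_singleton w k ih =>
      obtain ⟨hsk, γ, hB, hCc, hCg⟩ := ih
      set b := (genPat r B₀ w).1 with hbdef
      have hbkk : b k k = 0 := hsk.diag k
      have hσ := sigmaSign_pm w k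
      have hM0 : InvM k b (∅ : Finset (DIdx n r)) (hatPat r B₀ (expandWord r w)).1 := by
        intro d e; rw [hB d e]; simp
      have hC0 : InvC k b γ (sigmaSign w) (∅ : Finset (DIdx n r))
          (hatPat r B₀ (expandWord r w)).2.1 := by
        intro d e; rw [hCc d e]
        by_cases he1 : e.1 = k
        · simp [he1]
        · simp [he1]
      have hfold := fold_inv hbkk (enlarge r B₀) (blockL k) ∅
        (hatPat r B₀ (expandWord r w))
        (blockL_nodup k)
        (fun p hp => by
          simp only [blockL, List.mem_map] at hp
          obtain ⟨l, -, rfl⟩ := hp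
          rfl)
        (fun p _ => Finset.notMem_empty p)
        (fun d hd => absurd hd (Finset.notMem_empty d))
        hM0 hC0
      rw [Finset.empty_union] at hfold
      obtain ⟨hM1, hC1⟩ := hfold
      have hmem : ∀ d : DIdx n r, d ∈ (blockL (r := r) k).toFinset ↔ d.1 = k := blockL_mem k
      have hcard : (((blockL (r := r) k).toFinset.card : ℤ)) = (r k : ℤ) := blockL_card k
      have hexp : hatPat r B₀ (expandWord r (w ++ [k]))
          = (blockL k).foldl (hatStep (enlarge r B₀)) (hatPat r B₀ (expandWord r w)) := by
        rw [expandWord_append, hatPat_append]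
      have hgen : genPat r B₀ (w ++ [k]) = genStep r B₀ (genPat r B₀ w) k :=
        genPat_append r B₀ w k
      constructor
      · rw [hgen]
        exact skew_genMut hsk r k
      · refine ⟨Matrix.of fun i j =>
            if j = k then -(γ i k)
            else if i = k then
              γ k j + ((r k : ℤ) - 1) * fE (b k j) (γ k k)
                + fE (b k j) (γ k k + sigmaSign w k)
            else γ i j + (r k : ℤ) * fE (b k j) (γ i k), ?_, ?_, ?_⟩
        · -- B̂ component
          intro d e
          rw [hexp, hgen, hM1 d e]
          simp only [genStep]
          rw [← hbdef]
          by_cases hd1 : d.1 = k <;> by_cases he1 : e.1 = k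
          · rw [if_pos (iff_of_true ((hmem d).mpr hd1) ((hmem e).mpr he1))]
            simp [genMut, hd1, he1, hbkk]
          · rw [if_neg (fun h => he1 ((hmem e).mp (h.mp ((hmem d).mpr hd1))))]
            simp [genMut, hd1, he1]
          · rw [if_neg (fun h => hd1 ((hmem d).mp (h.mpr ((hmem e).mpr he1))))]
            simp [genMut, hd1, he1]
          · rw [if_pos (iff_of_false (fun h => hd1 ((hmem d).mp h))
              (fun h => he1 ((hmem e).mp h))), hcard]
            simp [genMut, hd1, he1, fE]
        · -- Ĉ component
          intro d e
          rw [hexp, hC1 d e, sigmaSign_append]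
          by_cases he1 : e.1 = k
          · rw [if_pos he1, if_pos ((hmem e).mpr he1)]
            simp only [Matrix.of_apply, he1, if_pos rfl, if_true, if_false, eq_self_iff_true]
            ring
          · rw [if_neg he1]
            by_cases hd1 : d.1 = k
            · rw [if_pos ((hmem d).mpr hd1), hcard]
              simp only [Matrix.of_apply, he1, if_neg he1, hd1, if_pos rfl, if_true, if_false, eq_self_iff_true]
              ring
            · rw [if_neg (fun h => hd1 ((hmem d).mp h)), hcard]
              simp only [Matrix.of_apply, if_neg he1, hd1, if_neg hd1, if_true, if_false]
              ring
        · -- C^g component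
          intro i j
          rw [hgen, sigmaSign_append]
          simp only [genStep, Matrix.of_apply]
          rw [← hbdef]
          by_cases hjk : j = k
          · rw [if_pos hjk, hCg i k, hjk]
            simp only [Matrix.of_apply, if_pos rfl, if_true, eq_self_iff_true]
            ring
          · rw [if_neg hjk, hCg i j, hCg i k, fE_def']
            by_cases hik : i = k
            · rw [if_pos hik, mul_one, hik]
              have hc : ((r k - 1 : ℕ) : ℤ) = (r k : ℤ) - 1 := by
                have := hr k; omega
              have hm : (r k : ℤ) * γ k k + sigmaSign w k
                  = ((r k - 1 : ℕ) : ℤ) * γ k k + (γ k k + sigmaSign w k) := by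
                rw [hc]; ring
              rw [hm, fE_key _ _ _ hσ (r k - 1), hc]
              simp only [Matrix.of_apply, if_neg hjk, if_pos rfl, if_true, eq_self_iff_true]
              ring
            · rw [if_neg hik, mul_zero, add_zero,
                fE_mul _ _ _ (by positivity : (0 : ℤ) ≤ (r i : ℤ))]
              simp only [Matrix.of_apply, if_neg hjk, if_neg hik]
              ring
end Outer
/-- Relations between the generalized `C`-matrix `C^g(w)` and the composite
`C`-matrix `C^c(w)`. -/
theorem Cg_eq_block_sums_of_Cc {n : ℕ} (hn : 1 ≤ n) (r : Fin n → ℕ)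
    (hr : ∀ i, 1 ≤ r i) (B₀ : Matrix (Fin n) (Fin n) ℤ)
    (hskew : ∃ d : Fin n → ℚ, (∀ i, 0 < d i) ∧
      ∀ i j, d i * (B₀ i j : ℚ) = -(d j * (B₀ j i : ℚ)))
    (w : List (Fin n)) (i j : Fin n) (l₀ : Fin (r i)) (m₀ : Fin (r j)) :
    (genPat r B₀ w).2.1 i j = ∑ l : Fin (r i), Cc r B₀ w ⟨i, l⟩ ⟨j, m₀⟩ ∧
    (r j : ℤ) * (genPat r B₀ w).2.1 i j
      = (r i : ℤ) * ∑ m : Fin (r j), Cc r B₀ w ⟨i, l₀⟩ ⟨j, m⟩ ∧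
    (genPat r B₀ w).2.1 i j
      = (r i : ℤ) * (Cc r B₀ w ⟨i, l₀⟩ ⟨j, m₀⟩ - sigmaSign w j * deltaD ⟨i, l₀⟩ ⟨j, m₀⟩)
        + sigmaSign w j * (if i = j then 1 else 0) := by
  obtain ⟨-, γ, -, hCc, hCg⟩ := main_inv r hr B₀ hskew w
  have hCc' : ∀ (l : Fin (r i)) (m : Fin (r j)),
      Cc r B₀ w ⟨i, l⟩ ⟨j, m⟩
        = γ i j + sigmaSign w j * deltaD (⟨i, l⟩ : DIdx n r) ⟨j, m⟩ :=
    fun l m => hCc ⟨i, l⟩ ⟨j, m⟩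
  have hsum1 : ∑ l : Fin (r i), deltaD (⟨i, l⟩ : DIdx n r) ⟨j, m₀⟩
      = if i = j then 1 else 0 := by
    rcases eq_or_ne i j with rfl | hne
    · simp [deltaD, Sigma.ext_iff, heq_eq_eq]
    · simp [deltaD, Sigma.ext_iff, heq_eq_eq, hne]
  have hsum2 : ∑ m : Fin (r j), deltaD (⟨i, l₀⟩ : DIdx n r) ⟨j, m⟩
      = if i = j then 1 else 0 := by
    rcases eq_or_ne i j with rfl | hne
    · simp [deltaD, Sigma.ext_iff, heq_eq_eq]
    · simp [deltaD, Sigma.ext_iff, heq_eq_eq, hne]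
  have hS1 : ∑ l : Fin (r i), Cc r B₀ w ⟨i, l⟩ ⟨j, m₀⟩
      = (r i : ℤ) * γ i j + sigmaSign w j * (if i = j then 1 else 0) := by
    simp only [hCc']
    rw [Finset.sum_add_distrib, Finset.sum_const, ← Finset.mul_sum, hsum1,
      Finset.card_univ, Fintype.card_fin, nsmul_eq_mul]
  have hS2 : ∑ m : Fin (r j), Cc r B₀ w ⟨i, l₀⟩ ⟨j, m⟩
      = (r j : ℤ) * γ i j + sigmaSign w j * (if i = j then 1 else 0) := by
    simp only [hCc']
    rw [Finset.sum_add_distrib, Finset.sum_const, ← Finset.mul_sum, hsum2,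
      Finset.card_univ, Fintype.card_fin, nsmul_eq_mul]
  refine ⟨?_, ?_, ?_⟩
  · rw [hCg i j, hS1]
  · rw [hCg i j, hS2]
    rcases eq_or_ne i j with rfl | hne
    · ring
    · simp only [hne, if_false]
      ring
  · rw [hCg i j, hCc' l₀ m₀]
    ring
end

section
/- For every word w, all i, j ∈ {1,…,n}, every l₀ ∈ {1,…,r_i} and every m₀ ∈ {1,…,r_j}: G^g(w)_{ij} = Σ_{m=1}^{r_j} G^c(w)_{(i,l₀),(j,m)}; r_i · G^g(w)_{ij} = r_j · Σ_{l=1}^{r_i} G^c(w)_{(i,l),(j,m₀)}; and G^g(w)_{ij} = r_j · ( G^c(w)_{(i,l₀),(j,m₀)} − σ_{j;w}δ_{(i,l₀),(j,m₀)} ) + σ_{j;w}δ_{ij}, where δ denotes the Kronecker delta. -/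
namespace GgAux

lemma intPos_natmul (c : ℕ) (x : ℤ) : intPos ((c : ℤ) * x) = (c : ℤ) * intPos x := by
  unfold intPos
  rw [mul_max_of_nonneg x 0 (by positivity : (0:ℤ) ≤ (c:ℤ)), mul_zero]

lemma intPos_of_nonneg {x : ℤ} (h : 0 ≤ x) : intPos x = x := max_eq_left h
lemma intPos_of_nonpos {x : ℤ} (h : x ≤ 0) : intPos x = 0 := max_eq_right h

lemma key (c : ℕ) (hc : 1 ≤ c) (σ u : ℤ) (hσ : σ = 1 ∨ σ = -1) :
    ((c : ℤ) - 1) * intPos (-u) + intPos (-u - σ) = intPos (-((c : ℤ) * u) - σ) := by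
  have hc1 : (1 : ℤ) ≤ (c : ℤ) := by exact_mod_cast hc
  rcases le_or_gt u 0 with hu | hu
  · have h1 : intPos (-u) = -u := intPos_of_nonneg (by omega)
    rcases hσ with h | h <;> subst h
    · rcases eq_or_lt_of_le hu with h0 | h0
      · subst h0; simp [intPos]
      · have h2 : intPos (-u - 1) = -u - 1 := intPos_of_nonneg (by omega)
        have h3 : intPos (-((c:ℤ)*u) - 1) = -((c:ℤ)*u) - 1 := by
          apply intPos_of_nonneg
          nlinarith
        rw [h1, h2, h3]; ring
    · have h2 : intPos (-u - (-1)) = -u + 1 := by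
        rw [intPos_of_nonneg (by omega)]; ring
      have h3 : intPos (-((c:ℤ)*u) - (-1)) = -((c:ℤ)*u) + 1 := by
        rw [intPos_of_nonneg (by nlinarith)]; ring
      rw [h1, h2, h3]; ring
  · have h1 : intPos (-u) = 0 := intPos_of_nonpos (by omega)
    have hcu : (1:ℤ) ≤ (c:ℤ) * u := by nlinarith
    rcases hσ with h | h <;> subst h
    · have h2 : intPos (-u - 1) = 0 := intPos_of_nonpos (by omega)
      have h3 : intPos (-((c:ℤ)*u) - 1) = 0 := intPos_of_nonpos (by omega)
      rw [h1, h2, h3]; ring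
    · have h2 : intPos (-u - (-1)) = 0 := intPos_of_nonpos (by omega)
      have h3 : intPos (-((c:ℤ)*u) - (-1)) = 0 := intPos_of_nonpos (by omega)
      rw [h1, h2, h3]; ring

variable {n : ℕ} {r : Fin n → ℕ}

lemma sigma_eq_iff (i j : Fin n) (l : Fin (r i)) (m : Fin (r j)) :
    (⟨i, l⟩ : DIdx n r) = ⟨j, m⟩ ↔ i = j ∧ (l : ℕ) = (m : ℕ) := by
  constructor
  · intro h
    obtain ⟨h1, h2⟩ := Sigma.mk.inj_iff.mp h
    subst h1
    exact ⟨rfl, congrArg Fin.val (eq_of_heq h2)⟩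
  · rintro ⟨h1, h2⟩
    subst h1
    exact congrArg _ (Fin.ext h2)

lemma deltaD_eq (i j : Fin n) (l : Fin (r i)) (m : Fin (r j)) :
    deltaD (⟨i, l⟩ : DIdx n r) ⟨j, m⟩ = if i = j ∧ (l : ℕ) = (m : ℕ) then 1 else 0 := by
  unfold deltaD
  simp only [sigma_eq_iff]

lemma deltaD_sum (i j : Fin n) (l : Fin (r i)) :
    ∑ m : Fin (r j), deltaD (⟨i, l⟩ : DIdx n r) ⟨j, m⟩ = if i = j then 1 else 0 := by
  by_cases h : i = j
  · subst h
    simp [deltaD_eq, Fin.val_eq_val]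
  · simp [deltaD_eq, h]

end GgAux
namespace GgAux
variable {n : ℕ}

def SkewOK (d : Fin n → ℚ) (B : Matrix (Fin n) (Fin n) ℤ) : Prop :=
  (∀ i, 0 < d i) ∧ ∀ i j, d i * (B i j : ℚ) = -(d j * (B j i : ℚ))

lemma SkewOK.diag {d : Fin n → ℚ} {B : Matrix (Fin n) (Fin n) ℤ} (h : SkewOK d B) (i : Fin n) :
    B i i = 0 := by
  have := h.2 i i
  have hd := (h.1 i).ne'
  have : (B i i : ℚ) = 0 := by
    have h2 : 2 * (d i * (B i i : ℚ)) = 0 := by linarith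
    rcases mul_eq_zero.mp h2 with h3 | h3
    · norm_num at h3
    · rcases mul_eq_zero.mp h3 with h4 | h4
      · exact absurd h4 hd
      · exact h4
  exact_mod_cast this

lemma SkewOK.pos_swap {d : Fin n → ℚ} {B : Matrix (Fin n) (Fin n) ℤ} (h : SkewOK d B)
    (i k : Fin n) : d i * (intPos (-(B i k)) : ℚ) = d k * (intPos (B k i) : ℚ) := by
  have hik := h.2 i k
  have hdi := h.1 i
  have hdk := h.1 k
  rcases le_or_gt (B i k) 0 with hb | hb
  · rw [intPos_of_nonneg (by omega : (0:ℤ) ≤ -(B i k))]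
    have hki : 0 ≤ (B k i : ℚ) := by
      have h1 : 0 ≤ -(d i * (B i k : ℚ)) := by
        have : (B i k : ℚ) ≤ 0 := by exact_mod_cast hb
        nlinarith
      rw [hik] at h1
      nlinarith
    rw [intPos_of_nonneg (by exact_mod_cast hki)]
    push_cast
    linarith [hik]
  · rw [intPos_of_nonpos (by omega : -(B i k) ≤ 0)]
    have hki : (B k i : ℚ) ≤ 0 := by
      have h1 : 0 < d i * (B i k : ℚ) := by
        have : (0:ℚ) < (B i k : ℚ) := by exact_mod_cast hb
        positivity
      rw [hik] at h1
      nlinarith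
    rw [intPos_of_nonpos (by exact_mod_cast hki)]
    push_cast
    ring

lemma SkewOK.genMut {d : Fin n → ℚ} {B : Matrix (Fin n) (Fin n) ℤ} (h : SkewOK d B)
    (r : Fin n → ℕ) (k : Fin n) : SkewOK d (genMut r B k) := by
  refine ⟨h.1, fun i j => ?_⟩
  unfold _root_.genMut
  simp only [Matrix.of_apply]
  by_cases hik : i = k
  · simp only [hik, true_or, or_true, if_pos]
    push_cast
    have := h.2 k j
    linarith
  · by_cases hjk : j = k
    · simp only [hjk, or_true, true_or, if_pos]
      push_cast
      have := h.2 i k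
      linarith
    · rw [if_neg (by tauto), if_neg (by tauto)]
      push_cast
      have e1 := h.2 i j
      have e2 := h.2 i k
      have e3 := h.2 j k
      have e4 := h.pos_swap i k
      have e5 := h.pos_swap j k
      linear_combination e1 + (r k : ℚ) * ((intPos (B k j) : ℤ) : ℚ) * e2
        + (r k : ℚ) * ((B k j : ℤ) : ℚ) * e4
        + (r k : ℚ) * ((intPos (B k i) : ℤ) : ℚ) * e3
        + (r k : ℚ) * ((B k i : ℤ) : ℚ) * e5

end GgAux
namespace GgAux
variable {n : ℕ} (r : Fin n → ℕ)

/-- C-increment function. -/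
def fC (B : Matrix (Fin n) (Fin n) ℤ) (k j : Fin n) (x : ℤ) : ℤ :=
  x * intPos (B k j) + intPos (-x) * B k j

/-- B-increment. -/
def incB (B : Matrix (Fin n) (Fin n) ℤ) (k i j : Fin n) : ℤ :=
  B i k * intPos (B k j) + intPos (-(B i k)) * B k j

/-- The new value of G-entries in mutated columns. -/
def Xterm (B₀ B u g : Matrix (Fin n) (Fin n) ℤ) (σ : Fin n → ℤ) (k i : Fin n) : ℤ :=
  (∑ j' : Fin n, if j' = k then 0 else
    ((r j' : ℤ) * (g i j' * intPos (-(B j' k)) - B₀ i j' * intPos (-(u j' k)))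
      + σ j' * (if i = j' then 1 else 0) * intPos (-(B j' k))))
  - B₀ i k * (((r k : ℤ) - 1) * intPos (-(u k k)) + intPos (-(u k k) - σ k))

def MidB (B : Matrix (Fin n) (Fin n) ℤ) (k : Fin n) (t : ℕ)
    (M : DIdx n r → DIdx n r → ℤ) : Prop :=
  ∀ d e : DIdx n r,
    M d e = if d.1 = k then (if e.1 = k then 0 else
              (if (d.2 : ℕ) < t then -(B k e.1) else B k e.1))
            else if e.1 = k then (if (e.2 : ℕ) < t then -(B d.1 k) else B d.1 k)
            else B d.1 e.1 + (t : ℤ) * incB B k d.1 e.1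

def MidC (B u : Matrix (Fin n) (Fin n) ℤ) (σ : Fin n → ℤ) (k : Fin n) (t : ℕ)
    (C : DIdx n r → DIdx n r → ℤ) : Prop :=
  ∀ d e : DIdx n r,
    C d e = if e.1 = k then
              (if (e.2 : ℕ) < t then -1 else 1) * (u d.1 k + σ k * deltaD d e)
            else u d.1 e.1 + σ e.1 * deltaD d e +
              (if d.1 = k then
                (if (d.2 : ℕ) < t then ((t : ℤ) - 1) * fC B k e.1 (u k k) + fC B k e.1 (u k k + σ k)
                 else (t : ℤ) * fC B k e.1 (u k k))
               else (t : ℤ) * fC B k e.1 (u d.1 k))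

def MidG (B₀ B u g : Matrix (Fin n) (Fin n) ℤ) (σ : Fin n → ℤ) (k : Fin n) (t : ℕ)
    (G : DIdx n r → DIdx n r → ℤ) : Prop :=
  ∀ d e : DIdx n r,
    G d e = if e.1 = k ∧ (e.2 : ℕ) < t then
              -(g d.1 k) - σ k * deltaD d e + Xterm r B₀ B u g σ k d.1
            else g d.1 e.1 + σ e.1 * deltaD d e

lemma midB_step {B : Matrix (Fin n) (Fin n) ℤ} {k : Fin n} {t : ℕ}
    {M : DIdx n r → DIdx n r → ℤ}
    (hM : MidB r B k t M) (pt : Fin (r k)) (hpt : (pt : ℕ) = t) :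
    MidB r B k (t + 1) (matMut M ⟨k, pt⟩) := by
  have hptlt : ¬ ((pt : ℕ) < t) := by omega
  have hdp' : ∀ (i : Fin n) (l : Fin (r i)),
      M ⟨i, l⟩ ⟨k, pt⟩ = if i = k then 0 else B i k := by
    intro i l
    rw [hM ⟨i, l⟩ ⟨k, pt⟩]
    by_cases hi : i = k
    · simp [hi]
    · simp [hi, hptlt]
  have hpe' : ∀ (j : Fin n) (m : Fin (r j)),
      M ⟨k, pt⟩ ⟨j, m⟩ = if j = k then 0 else B k j := by
    intro j m
    rw [hM ⟨k, pt⟩ ⟨j, m⟩]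
    by_cases hj : j = k
    · simp [hj]
    · simp [hj, hptlt]
  rintro ⟨i, l⟩ ⟨j, m⟩
  have hde := hM ⟨i, l⟩ ⟨j, m⟩
  unfold matMut
  dsimp only at hde ⊢
  simp only [sigma_eq_iff, hpt]
  by_cases hi : i = k
  · rw [if_pos hi] at hde ⊢
    by_cases hl : (l : ℕ) = t
    · rw [if_pos (Or.inl ⟨hi, hl⟩), hde]
      by_cases hj : j = k
      · simp [hj]
      · rw [if_neg hj, if_neg hj, if_neg (by omega), if_pos (by omega)]
    · by_cases hem : j = k ∧ (m : ℕ) = t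
      · rw [if_pos (Or.inr hem), hde, if_pos hem.1, if_pos hem.1, neg_zero]
      · rw [if_neg (by rintro (⟨_, h⟩ | h); exact hl h; exact hem h)]
        rw [hde, hdp' i l, hpe' j m, if_pos hi]
        by_cases hj : j = k
        · simp [hj, intPos]
        · rw [if_neg hj, if_neg hj, if_neg hj]
          simp only [neg_zero, zero_mul, add_zero, intPos, max_self, mul_zero]
          by_cases hlt : (l : ℕ) < t
          · rw [if_pos hlt, if_pos (by omega)]
          · rw [if_neg hlt, if_neg (by omega)]
  · rw [if_neg hi] at hde ⊢
    by_cases hem : j = k ∧ (m : ℕ) = t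
    · rw [if_pos (Or.inr hem), hde, if_pos hem.1, if_pos hem.1]
      rw [if_neg (by omega), if_pos (by omega)]
    · rw [if_neg (by rintro (⟨h, _⟩ | h); exact hi h; exact hem h)]
      rw [hde, hdp' i l, hpe' j m, if_neg hi]
      by_cases hj : j = k
      · rw [if_pos hj, if_pos hj, if_pos hj]
        simp only [intPos, max_self, mul_zero, add_zero]
        have hm : ¬ ((m : ℕ) = t) := fun h => hem ⟨hj, h⟩
        rcases Nat.lt_or_ge (m : ℕ) t with h | h
        · rw [if_pos h, if_pos (by omega)]
        · rw [if_neg (by omega), if_neg (by omega)]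
      · rw [if_neg hj, if_neg hj, if_neg hj]
        unfold incB
        push_cast
        ring

lemma midC_step {B u : Matrix (Fin n) (Fin n) ℤ} {σ : Fin n → ℤ} {k : Fin n} {t : ℕ}
    {M C : DIdx n r → DIdx n r → ℤ}
    (hM : MidB r B k t M) (hC : MidC r B u σ k t C) (pt : Fin (r k)) (hpt : (pt : ℕ) = t) :
    MidC r B u σ k (t + 1) (fun d e => if e = ⟨k, pt⟩ then -(C d ⟨k, pt⟩)
      else C d e + C d ⟨k, pt⟩ * intPos (M ⟨k, pt⟩ e) + intPos (-(C d ⟨k, pt⟩)) * M ⟨k, pt⟩ e) := by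
  have hptlt : ¬ ((pt : ℕ) < t) := by omega
  have hpe' : ∀ (j : Fin n) (m : Fin (r j)),
      M ⟨k, pt⟩ ⟨j, m⟩ = if j = k then 0 else B k j := by
    intro j m
    rw [hM ⟨k, pt⟩ ⟨j, m⟩]
    by_cases hj : j = k
    · simp [hj]
    · simp [hj, hptlt]
  have hdp' : ∀ (i : Fin n) (l : Fin (r i)),
      C ⟨i, l⟩ ⟨k, pt⟩ = u i k + σ k * deltaD ⟨i, l⟩ ⟨k, pt⟩ := by
    intro i l
    rw [hC ⟨i, l⟩ ⟨k, pt⟩]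
    dsimp only
    rw [if_pos rfl, if_neg hptlt, one_mul]
  rintro ⟨i, l⟩ ⟨j, m⟩
  have hde := hC ⟨i, l⟩ ⟨j, m⟩
  dsimp only at hde ⊢
  simp only [sigma_eq_iff, hpt]
  have hΔ : deltaD (⟨i, l⟩ : DIdx n r) ⟨k, pt⟩ = if i = k ∧ (l : ℕ) = t then 1 else 0 := by
    rw [deltaD_eq, hpt]
  by_cases hem : j = k ∧ (m : ℕ) = t
  · rw [if_pos hem, hdp' i l, if_pos hem.1, if_pos (by omega)]
    have h2 : deltaD (⟨i, l⟩ : DIdx n r) ⟨j, m⟩ = if i = k ∧ (l : ℕ) = t then 1 else 0 := by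
      rw [deltaD_eq, hem.2, hem.1]
    rw [hΔ, h2]
    ring
  · rw [if_neg hem, hde, hdp' i l, hpe' j m]
    by_cases hj : j = k
    · rw [if_pos hj, if_pos hj, if_pos hj]
      simp only [intPos, max_self, mul_zero, add_zero]
      have hm : ¬ ((m : ℕ) = t) := fun h => hem ⟨hj, h⟩
      rcases Nat.lt_or_ge (m : ℕ) t with h | h
      · rw [if_pos h, if_pos (by omega)]
      · rw [if_neg (by omega), if_neg (by omega)]
    · rw [if_neg hj, if_neg hj, if_neg hj, hΔ]
      by_cases hi : i = k
      · rw [if_pos hi, if_pos hi]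
        have hu : u i k = u k k := by rw [hi]
        by_cases hl : (l : ℕ) = t
        · rw [if_pos (show i = k ∧ (l : ℕ) = t from ⟨hi, hl⟩),
            if_neg (show ¬ ((l : ℕ) < t) by omega),
            if_pos (show (l : ℕ) < t + 1 by omega), hu]
          unfold fC
          push_cast
          ring
        · rw [if_neg (show ¬ (i = k ∧ (l : ℕ) = t) from fun h => hl h.2), hu]
          by_cases hlt : (l : ℕ) < t
          · rw [if_pos hlt, if_pos (show (l : ℕ) < t + 1 by omega)]
            unfold fC
            push_cast
            ring
          · rw [if_neg hlt, if_neg (show ¬ ((l : ℕ) < t + 1) by omega)]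
            unfold fC
            push_cast
            ring
      · rw [if_neg hi, if_neg hi,
          if_neg (show ¬ (i = k ∧ (l : ℕ) = t) from fun h => hi h.1)]
        unfold fC
        push_cast
        ring

lemma sum_if_val (N : ℕ) (p0 : Fin N) (A Bv : ℤ) :
    ∑ m' : Fin N, (if (m' : ℕ) = (p0 : ℕ) then A else Bv) = ((N : ℤ) - 1) * Bv + A := by
  have h : ∀ m' : Fin N, (if (m' : ℕ) = (p0 : ℕ) then A else Bv)
      = Bv + (if m' = p0 then A - Bv else 0) := by
    intro m'
    by_cases h : m' = p0
    · subst h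
      rw [if_pos rfl, if_pos rfl]
      ring
    · rw [if_neg (fun hh => h (Fin.ext hh)), if_neg h]
      ring
  rw [Finset.sum_congr rfl fun m' _ => h m', Finset.sum_add_distrib, Finset.sum_const,
    Finset.sum_ite_eq' Finset.univ p0, if_pos (Finset.mem_univ p0), Finset.card_univ,
    Fintype.card_fin, nsmul_eq_mul]
  push_cast
  ring

lemma sum_split_at (k : Fin n) (K0 : ℤ) (A : Fin n → ℤ) :
    (∑ j' : Fin n, if j' = k then K0 else A j')
      = (∑ j' : Fin n, if j' = k then 0 else A j') + K0 := by
  have h : ∀ j' : Fin n, (if j' = k then K0 else A j')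
      = (if j' = k then 0 else A j') + (if j' = k then K0 else 0) := by
    intro j'
    by_cases h : j' = k <;> simp [h]
  rw [Finset.sum_congr rfl fun j' _ => h j', Finset.sum_add_distrib,
    Finset.sum_ite_eq' Finset.univ k, if_pos (Finset.mem_univ k)]

lemma midG_step {B₀ B u g : Matrix (Fin n) (Fin n) ℤ} {σ : Fin n → ℤ} {k : Fin n} {t : ℕ}
    {M C G : DIdx n r → DIdx n r → ℤ}
    (hM : MidB r B k t M) (hC : MidC r B u σ k t C) (hG : MidG r B₀ B u g σ k t G)
    (pt : Fin (r k)) (hpt : (pt : ℕ) = t) :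
    MidG r B₀ B u g σ k (t + 1) (fun d e => if e = ⟨k, pt⟩ then
        -(G d ⟨k, pt⟩) + ∑ a : DIdx n r,
          (G d a * intPos (-(M a ⟨k, pt⟩)) - enlarge r B₀ d a * intPos (-(C a ⟨k, pt⟩)))
      else G d e) := by
  have hptlt : ¬ ((pt : ℕ) < t) := by omega
  have hMcol : ∀ a : DIdx n r, M a ⟨k, pt⟩ = if a.1 = k then 0 else B a.1 k := by
    rintro ⟨j', m'⟩
    rw [hM ⟨j', m'⟩ ⟨k, pt⟩]
    by_cases hj' : j' = k
    · simp [hj']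
    · simp [hj', hptlt]
  have hCcol : ∀ a : DIdx n r, C a ⟨k, pt⟩ = u a.1 k + σ k * deltaD a ⟨k, pt⟩ := by
    rintro ⟨j', m'⟩
    rw [hC ⟨j', m'⟩ ⟨k, pt⟩]
    dsimp only
    rw [if_pos rfl, if_neg hptlt, one_mul]
  have hGcol : ∀ d : DIdx n r, G d ⟨k, pt⟩ = g d.1 k + σ k * deltaD d ⟨k, pt⟩ := by
    intro d
    rw [hG d ⟨k, pt⟩]
    exact if_neg (fun h => hptlt h.2)
  have hsum : ∀ (i : Fin n) (l : Fin (r i)),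
      (∑ a : DIdx n r, (G ⟨i, l⟩ a * intPos (-(M a ⟨k, pt⟩))
        - enlarge r B₀ ⟨i, l⟩ a * intPos (-(C a ⟨k, pt⟩))))
      = Xterm r B₀ B u g σ k i := by
    intro i l
    have inner : ∀ j' : Fin n,
        (∑ m' : Fin (r j'), (G ⟨i, l⟩ ⟨j', m'⟩ * intPos (-(M ⟨j', m'⟩ ⟨k, pt⟩))
          - enlarge r B₀ ⟨i, l⟩ ⟨j', m'⟩ * intPos (-(C ⟨j', m'⟩ ⟨k, pt⟩))))
        = if j' = k then
            -(B₀ i k) * (((r k : ℤ) - 1) * intPos (-(u k k)) + intPos (-(u k k) - σ k))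
          else (r j' : ℤ) * (g i j' * intPos (-(B j' k)) - B₀ i j' * intPos (-(u j' k)))
            + σ j' * (if i = j' then 1 else 0) * intPos (-(B j' k)) := by
      intro j'
      by_cases hj' : j' = k
      · subst hj'
        rw [if_pos rfl]
        have step : ∀ m' : Fin (r j'),
            (G ⟨i, l⟩ ⟨j', m'⟩ * intPos (-(M ⟨j', m'⟩ ⟨j', pt⟩))
              - enlarge r B₀ ⟨i, l⟩ ⟨j', m'⟩ * intPos (-(C ⟨j', m'⟩ ⟨j', pt⟩)))
            = -(B₀ i j') * (if (m' : ℕ) = (pt : ℕ) then intPos (-(u j' j') - σ j')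
                else intPos (-(u j' j'))) := by
          intro m'
          have h0 : intPos (-(0 : ℤ)) = 0 := by simp [intPos]
          have hD : deltaD (⟨j', m'⟩ : DIdx n r) ⟨j', pt⟩
              = if (m' : ℕ) = (pt : ℕ) then 1 else 0 := by
            rw [deltaD_eq]
            by_cases hm : (m' : ℕ) = (pt : ℕ)
            · rw [if_pos (show j' = j' ∧ (m' : ℕ) = (pt : ℕ) from ⟨rfl, hm⟩), if_pos hm]
            · rw [if_neg (show ¬ (j' = j' ∧ (m' : ℕ) = (pt : ℕ)) from fun h => hm h.2),
                if_neg hm]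
          rw [hMcol ⟨j', m'⟩, hCcol ⟨j', m'⟩, hD]
          dsimp only
          rw [if_pos rfl, h0, mul_zero]
          unfold enlarge
          dsimp only
          by_cases hm : (m' : ℕ) = (pt : ℕ)
          · rw [if_pos hm, if_pos hm,
              show -(u j' j' + σ j' * 1) = -(u j' j') - σ j' from by ring]
            ring
          · rw [if_neg hm, if_neg hm,
              show -(u j' j' + σ j' * 0) = -(u j' j') from by ring]
            ring
        rw [Finset.sum_congr rfl fun m' _ => step m', ← Finset.mul_sum,
          sum_if_val (r j') pt]
      · rw [if_neg hj']
        have step : ∀ m' : Fin (r j'),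
            (G ⟨i, l⟩ ⟨j', m'⟩ * intPos (-(M ⟨j', m'⟩ ⟨k, pt⟩))
              - enlarge r B₀ ⟨i, l⟩ ⟨j', m'⟩ * intPos (-(C ⟨j', m'⟩ ⟨k, pt⟩)))
            = (g i j' * intPos (-(B j' k)) - B₀ i j' * intPos (-(u j' k)))
              + σ j' * intPos (-(B j' k)) * deltaD (⟨i, l⟩ : DIdx n r) ⟨j', m'⟩ := by
          intro m'
          have hD : deltaD (⟨j', m'⟩ : DIdx n r) ⟨k, pt⟩ = 0 := by
            rw [deltaD_eq]
            exact if_neg (fun h => hj' h.1)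
          rw [hMcol ⟨j', m'⟩, hCcol ⟨j', m'⟩, hG ⟨i, l⟩ ⟨j', m'⟩, hD]
          dsimp only
          rw [if_neg hj', if_neg (show ¬ (j' = k ∧ (m' : ℕ) < t) from fun h => hj' h.1)]
          unfold enlarge
          dsimp only
          ring
        rw [Finset.sum_congr rfl fun m' _ => step m', Finset.sum_add_distrib,
          Finset.sum_const, ← Finset.mul_sum, deltaD_sum, Finset.card_univ,
          Fintype.card_fin, nsmul_eq_mul]
        push_cast
        ring
    rw [← Finset.univ_sigma_univ, Finset.sum_sigma,
      Finset.sum_congr rfl fun j' _ => inner j', sum_split_at k]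
    unfold Xterm
    ring
  rintro ⟨i, l⟩ ⟨j, m⟩
  dsimp only
  simp only [sigma_eq_iff, hpt]
  by_cases hem : j = k ∧ (m : ℕ) = t
  · rw [if_pos hem, hGcol ⟨i, l⟩, hsum i l,
      if_pos (show j = k ∧ (m : ℕ) < t + 1 from ⟨hem.1, by omega⟩)]
    have h1 : deltaD (⟨i, l⟩ : DIdx n r) ⟨k, pt⟩ = deltaD (⟨i, l⟩ : DIdx n r) ⟨j, m⟩ := by
      rw [deltaD_eq, deltaD_eq, hpt, hem.2, hem.1]
    rw [h1]
    ring
  · rw [if_neg hem, hG ⟨i, l⟩ ⟨j, m⟩]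
    dsimp only
    by_cases hc : j = k ∧ (m : ℕ) < t
    · rw [if_pos hc, if_pos (show j = k ∧ (m : ℕ) < t + 1 from ⟨hc.1, by omega⟩)]
    · rw [if_neg hc, if_neg ?_]
      rintro ⟨h1, h2⟩
      have hm : ¬ ((m : ℕ) = t) := fun hh => hem ⟨h1, hh⟩
      exact hc ⟨h1, by omega⟩
end GgAux
namespace GgAux
variable {n : ℕ} (r : Fin n → ℕ)

/-- The block word `(k,0),…,(k,r_k−1)`. -/
def blockWord (k : Fin n) : List (DIdx n r) :=
  (List.finRange (r k)).map fun l => ⟨k, l⟩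

lemma take_map_succ {α : Type*} (N t : ℕ) (ht : t < N) (f : Fin N → α) :
    (((List.finRange N).take (t + 1)).map f)
      = (((List.finRange N).take t).map f) ++ [f ⟨t, ht⟩] := by
  have hlen : t < (List.finRange N).length := by
    rw [List.length_finRange]; exact ht
  rw [List.take_succ, List.getElem?_eq_getElem hlen, List.map_append]
  congr 1
  have : (List.finRange N)[t] = ⟨t, ht⟩ := by
    have := List.getElem_finRange (n := N) hlen
    simpa [List.get_eq_getElem] using this
  simp [this]

lemma mid_fold {B₀ B u g : Matrix (Fin n) (Fin n) ℤ} {σ : Fin n → ℤ} {k : Fin n}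
    {S : (DIdx n r → DIdx n r → ℤ) × (DIdx n r → DIdx n r → ℤ) × (DIdx n r → DIdx n r → ℤ)}
    (hB : MidB r B k 0 S.1) (hC : MidC r B u σ k 0 S.2.1) (hG : MidG r B₀ B u g σ k 0 S.2.2)
    (t : ℕ) (ht : t ≤ r k) :
    MidB r B k t (List.foldl (hatStep (enlarge r B₀)) S
        (((List.finRange (r k)).take t).map fun l => (⟨k, l⟩ : DIdx n r))).1 ∧
    MidC r B u σ k t (List.foldl (hatStep (enlarge r B₀)) S
        (((List.finRange (r k)).take t).map fun l => (⟨k, l⟩ : DIdx n r))).2.1 ∧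
    MidG r B₀ B u g σ k t (List.foldl (hatStep (enlarge r B₀)) S
        (((List.finRange (r k)).take t).map fun l => (⟨k, l⟩ : DIdx n r))).2.2 := by
  induction t with
  | zero => simpa using ⟨hB, hC, hG⟩
  | succ t ih =>
    have ht' : t < r k := ht
    obtain ⟨ihB, ihC, ihG⟩ := ih (le_of_lt ht')
    rw [take_map_succ (r k) t ht', List.foldl_append]
    set St := List.foldl (hatStep (enlarge r B₀)) S
      (((List.finRange (r k)).take t).map fun l => (⟨k, l⟩ : DIdx n r)) with hSt
    refine ⟨?_, ?_, ?_⟩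
    · exact midB_step r ihB ⟨t, ht'⟩ rfl
    · exact midC_step r ihB ihC ⟨t, ht'⟩ rfl
    · exact midG_step r ihB ihC ihG ⟨t, ht'⟩ rfl

end GgAux
namespace GgAux
variable {n : ℕ} (r : Fin n → ℕ)

lemma mid0_B {B : Matrix (Fin n) (Fin n) ℤ} {k : Fin n}
    {M : DIdx n r → DIdx n r → ℤ} (hB : ∀ d e, M d e = B d.1 e.1)
    (hBkk : B k k = 0) : MidB r B k 0 M := by
  rintro ⟨i, l⟩ ⟨j, m⟩
  rw [hB ⟨i, l⟩ ⟨j, m⟩]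
  dsimp only
  by_cases hi : i = k
  · rw [if_pos hi]
    by_cases hj : j = k
    · rw [if_pos hj, hi, hj]
      exact hBkk
    · rw [if_neg hj, if_neg (by omega), hi]
  · rw [if_neg hi]
    by_cases hj : j = k
    · rw [if_pos hj, if_neg (by omega), hj]
    · rw [if_neg hj]
      push_cast
      ring

lemma mid0_C {B u : Matrix (Fin n) (Fin n) ℤ} {σ : Fin n → ℤ} {k : Fin n}
    {C : DIdx n r → DIdx n r → ℤ}
    (hC : ∀ (i j : Fin n) (l : Fin (r i)) (m : Fin (r j)),
      C ⟨i, l⟩ ⟨j, m⟩ = u i j + σ j * deltaD ⟨i, l⟩ ⟨j, m⟩) :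
    MidC r B u σ k 0 C := by
  rintro ⟨i, l⟩ ⟨j, m⟩
  rw [hC i j l m]
  dsimp only
  by_cases hj : j = k
  · rw [if_pos hj, if_neg (by omega), one_mul]
    have h1 : u i j = u i k := by rw [hj]
    have h2 : σ j = σ k := by rw [hj]
    rw [h1, h2]
  · rw [if_neg hj]
    by_cases hi : i = k
    · rw [if_pos hi, if_neg (by omega)]
      push_cast
      ring
    · rw [if_neg hi]
      push_cast
      ring

lemma mid0_G {B₀ B u g : Matrix (Fin n) (Fin n) ℤ} {σ : Fin n → ℤ} {k : Fin n}
    {G : DIdx n r → DIdx n r → ℤ}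
    (hG : ∀ (i j : Fin n) (l : Fin (r i)) (m : Fin (r j)),
      G ⟨i, l⟩ ⟨j, m⟩ = g i j + σ j * deltaD ⟨i, l⟩ ⟨j, m⟩) :
    MidG r B₀ B u g σ k 0 G := by
  rintro ⟨i, l⟩ ⟨j, m⟩
  rw [hG i j l m]
  dsimp only
  rw [if_neg (by rintro ⟨-, h⟩; omega)]

lemma block_main {B₀ B u g : Matrix (Fin n) (Fin n) ℤ} {σ : Fin n → ℤ} {k : Fin n}
    {S : (DIdx n r → DIdx n r → ℤ) × (DIdx n r → DIdx n r → ℤ) × (DIdx n r → DIdx n r → ℤ)}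
    (hB : ∀ d e, S.1 d e = B d.1 e.1)
    (hC : ∀ (i j : Fin n) (l : Fin (r i)) (m : Fin (r j)),
      S.2.1 ⟨i, l⟩ ⟨j, m⟩ = u i j + σ j * deltaD ⟨i, l⟩ ⟨j, m⟩)
    (hG : ∀ (i j : Fin n) (l : Fin (r i)) (m : Fin (r j)),
      S.2.2 ⟨i, l⟩ ⟨j, m⟩ = g i j + σ j * deltaD ⟨i, l⟩ ⟨j, m⟩)
    (hBkk : B k k = 0) :
    (∀ d e, (List.foldl (hatStep (enlarge r B₀)) S (blockWord r k)).1 d e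
        = genMut r B k d.1 e.1) ∧
    (∀ (i j : Fin n) (l : Fin (r i)) (m : Fin (r j)),
      (List.foldl (hatStep (enlarge r B₀)) S (blockWord r k)).2.1 ⟨i, l⟩ ⟨j, m⟩
        = (if j = k then -(u i k) else u i j +
            (if i = k then ((r k : ℤ) - 1) * fC B k j (u k k) + fC B k j (u k k + σ k)
             else (r k : ℤ) * fC B k j (u i k)))
          + ((if j = k then (-1 : ℤ) else 1) * σ j) * deltaD ⟨i, l⟩ ⟨j, m⟩) ∧
    (∀ (i j : Fin n) (l : Fin (r i)) (m : Fin (r j)),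
      (List.foldl (hatStep (enlarge r B₀)) S (blockWord r k)).2.2 ⟨i, l⟩ ⟨j, m⟩
        = (if j = k then -(g i k) + Xterm r B₀ B u g σ k i else g i j)
          + ((if j = k then (-1 : ℤ) else 1) * σ j) * deltaD ⟨i, l⟩ ⟨j, m⟩) := by
  have hblock : blockWord r k
      = ((List.finRange (r k)).take (r k)).map fun l => (⟨k, l⟩ : DIdx n r) := by
    unfold blockWord
    congr 1
    exact (List.take_of_length_le (by simp)).symm
  obtain ⟨hMB, hMC, hMG⟩ := mid_fold r (mid0_B r hB hBkk) (mid0_C r hC) (mid0_G r hG)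
    (r k) le_rfl
  rw [hblock]
  refine ⟨?_, ?_, ?_⟩
  · rintro ⟨i, l⟩ ⟨j, m⟩
    rw [hMB ⟨i, l⟩ ⟨j, m⟩]
    unfold genMut
    dsimp only [Matrix.of_apply]
    by_cases hi : i = k
    · rw [if_pos hi]
      have hri : r i = r k := by rw [hi]
      by_cases hj : j = k
      · rw [if_pos hj, if_pos (Or.inl hi)]
        have hb : B i j = 0 := by rw [hi, hj]; exact hBkk
        rw [hb]
        ring
      · rw [if_neg hj, if_pos (by omega), if_pos (Or.inl hi)]
        have hb : B i j = B k j := by rw [hi]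
        rw [hb]
    · rw [if_neg hi]
      by_cases hj : j = k
      · have hrj : r j = r k := by rw [hj]
        rw [if_pos hj, if_pos (by omega), if_pos (Or.inr hj)]
        have hb : B i j = B i k := by rw [hj]
        rw [hb]
      · rw [if_neg hj, if_neg (by tauto)]
        unfold incB
        ring
  · intro i j l m
    rw [hMC ⟨i, l⟩ ⟨j, m⟩]
    dsimp only
    by_cases hj : j = k
    · have hrj : r j = r k := by rw [hj]
      rw [if_pos hj, if_pos (by omega), if_pos hj, if_pos hj]
      have hs : σ j = σ k := by rw [hj]
      rw [hs]
      ring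
    · rw [if_neg hj, if_neg hj, if_neg hj]
      by_cases hi : i = k
      · have hri : r i = r k := by rw [hi]
        rw [if_pos hi, if_pos hi, if_pos (by omega)]
        ring
      · rw [if_neg hi, if_neg hi]
        ring
  · intro i j l m
    rw [hMG ⟨i, l⟩ ⟨j, m⟩]
    dsimp only
    by_cases hj : j = k
    · have hrj : r j = r k := by rw [hj]
      rw [if_pos (show j = k ∧ (m : ℕ) < r k from ⟨hj, by omega⟩), if_pos hj, if_pos hj]
      have hs : σ j = σ k := by rw [hj]
      rw [hs]
      ring
    · rw [if_neg (show ¬ (j = k ∧ (m : ℕ) < r k) from fun h => hj h.1), if_neg hj, if_neg hj]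
      ring

end GgAux
namespace GgAux
variable {n : ℕ} (r : Fin n → ℕ) (B₀ : Matrix (Fin n) (Fin n) ℤ)

lemma deltaD_sum' (i j : Fin n) (m : Fin (r j)) :
    ∑ l : Fin (r i), deltaD (⟨i, l⟩ : DIdx n r) ⟨j, m⟩ = if i = j then 1 else 0 := by
  by_cases h : i = j
  · subst h
    simp [deltaD_eq, Fin.val_eq_val]
  · simp [deltaD_eq, h]

lemma sigmaSign_pm (w : List (Fin n)) (j : Fin n) :
    sigmaSign w j = 1 ∨ sigmaSign w j = -1 := by
  unfold sigmaSign
  rcases Nat.even_or_odd (w.count j) with h | h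
  · left; exact h.neg_one_pow
  · right; exact h.neg_one_pow

lemma sigmaSign_append (w : List (Fin n)) (k j : Fin n) :
    sigmaSign (w ++ [k]) j = (if j = k then (-1 : ℤ) else 1) * sigmaSign w j := by
  unfold sigmaSign
  rw [List.count_append]
  have hc : ([k] : List (Fin n)).count j = if j = k then 1 else 0 := by
    rw [List.count_singleton']
    by_cases h : j = k
    · rw [if_pos h, if_pos h.symm]
    · rw [if_neg h, if_neg (fun hh => h hh.symm)]
  rw [hc]
  by_cases h : j = k
  · rw [if_pos h, if_pos h, pow_add]
    ring
  · rw [if_neg h, if_neg h, add_zero, one_mul]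

lemma expandWord_append (w : List (Fin n)) (k : Fin n) :
    expandWord r (w ++ [k]) = expandWord r w ++ blockWord r k := by
  unfold expandWord blockWord
  rw [List.flatMap_append]
  simp

lemma genPat_append (w : List (Fin n)) (k : Fin n) :
    genPat r B₀ (w ++ [k]) = genStep r B₀ (genPat r B₀ w) k := by
  unfold genPat
  rw [List.foldl_append]
  rfl

lemma hatPat_append_block (w : List (Fin n)) (k : Fin n) :
    hatPat r B₀ (expandWord r (w ++ [k]))
      = List.foldl (hatStep (enlarge r B₀)) (hatPat r B₀ (expandWord r w)) (blockWord r k) := by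
  unfold hatPat
  rw [expandWord_append, List.foldl_append]

def Inv (dv : Fin n → ℚ) (w : List (Fin n)) : Prop :=
  SkewOK dv (genPat r B₀ w).1 ∧
  (∀ d e : DIdx n r, (hatPat r B₀ (expandWord r w)).1 d e = (genPat r B₀ w).1 d.1 e.1) ∧
  (∀ (i j : Fin n) (l : Fin (r i)) (m : Fin (r j)),
    (genPat r B₀ w).2.1 i j = (r i : ℤ) * ((hatPat r B₀ (expandWord r w)).2.1 ⟨i, l⟩ ⟨j, m⟩
      - sigmaSign w j * deltaD ⟨i, l⟩ ⟨j, m⟩) + sigmaSign w j * (if i = j then 1 else 0)) ∧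
  (∀ (i j : Fin n) (l : Fin (r i)) (m : Fin (r j)),
    (genPat r B₀ w).2.2 i j = (r j : ℤ) * ((hatPat r B₀ (expandWord r w)).2.2 ⟨i, l⟩ ⟨j, m⟩
      - sigmaSign w j * deltaD ⟨i, l⟩ ⟨j, m⟩) + sigmaSign w j * (if i = j then 1 else 0))

lemma inv_nil (dv : Fin n → ℚ) (hskew : SkewOK dv B₀) : Inv r B₀ dv [] := by
  have hσ : ∀ j : Fin n, sigmaSign ([] : List (Fin n)) j = 1 := by
    intro j; simp [sigmaSign]
  refine ⟨hskew, fun d e => rfl, ?_, ?_⟩ <;>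
  · intro i j l m
    have hid : idMat (⟨i, l⟩ : DIdx n r) ⟨j, m⟩ = deltaD (⟨i, l⟩ : DIdx n r) ⟨j, m⟩ := rfl
    show (1 : Matrix (Fin n) (Fin n) ℤ) i j = _
    rw [Matrix.one_apply, hσ j, one_mul, one_mul]
    show _ = _ * (idMat (⟨i, l⟩ : DIdx n r) ⟨j, m⟩ - deltaD (⟨i, l⟩ : DIdx n r) ⟨j, m⟩) + _
    rw [hid, sub_self, mul_zero, zero_add]

lemma inv_step (hr : ∀ i, 1 ≤ r i) (dv : Fin n → ℚ) (w : List (Fin n)) (k : Fin n)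
    (h : Inv r B₀ dv w) : Inv r B₀ dv (w ++ [k]) := by
  set T := genPat r B₀ w with hT
  set S := hatPat r B₀ (expandWord r w) with hS
  set σ : Fin n → ℤ := sigmaSign w with hσdef
  obtain ⟨hskew, hB, hCrel, hGrel⟩ := h
  have hσpm : ∀ j, σ j = 1 ∨ σ j = -1 := fun j => sigmaSign_pm w j
  have hrne : ∀ i : Fin n, ((r i : ℤ)) ≠ 0 := by
    intro i
    have := hr i
    exact Int.natCast_ne_zero.mpr (by omega)
  set u : Matrix (Fin n) (Fin n) ℤ := Matrix.of fun i j =>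
    S.2.1 ⟨i, ⟨0, hr i⟩⟩ ⟨j, ⟨0, hr j⟩⟩
      - σ j * deltaD ⟨i, ⟨0, hr i⟩⟩ ⟨j, ⟨0, hr j⟩⟩ with hu
  set g : Matrix (Fin n) (Fin n) ℤ := Matrix.of fun i j =>
    S.2.2 ⟨i, ⟨0, hr i⟩⟩ ⟨j, ⟨0, hr j⟩⟩
      - σ j * deltaD ⟨i, ⟨0, hr i⟩⟩ ⟨j, ⟨0, hr j⟩⟩ with hg
  have hCg : ∀ i j, T.2.1 i j = (r i : ℤ) * u i j + σ j * (if i = j then 1 else 0) := by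
    intro i j
    rw [hCrel i j ⟨0, hr i⟩ ⟨0, hr j⟩]
    simp only [hu, Matrix.of_apply]
    rfl
  have hGg : ∀ i j, T.2.2 i j = (r j : ℤ) * g i j + σ j * (if i = j then 1 else 0) := by
    intro i j
    rw [hGrel i j ⟨0, hr i⟩ ⟨0, hr j⟩]
    simp only [hg, Matrix.of_apply]
    rfl
  have hCe : ∀ (i j : Fin n) (l : Fin (r i)) (m : Fin (r j)),
      S.2.1 ⟨i, l⟩ ⟨j, m⟩ = u i j + σ j * deltaD ⟨i, l⟩ ⟨j, m⟩ := by
    intro i j l m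
    have h1 := hCrel i j l m
    have h2 := hCg i j
    have h3 : (r i : ℤ) * (S.2.1 ⟨i, l⟩ ⟨j, m⟩ - σ j * deltaD ⟨i, l⟩ ⟨j, m⟩)
        = (r i : ℤ) * u i j := by
      have h4 := h1.symm.trans h2
      linarith
    have h5 := mul_left_cancel₀ (hrne i) h3
    linarith
  have hGe : ∀ (i j : Fin n) (l : Fin (r i)) (m : Fin (r j)),
      S.2.2 ⟨i, l⟩ ⟨j, m⟩ = g i j + σ j * deltaD ⟨i, l⟩ ⟨j, m⟩ := by
    intro i j l m
    have h1 := hGrel i j l m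
    have h2 := hGg i j
    have h3 : (r j : ℤ) * (S.2.2 ⟨i, l⟩ ⟨j, m⟩ - σ j * deltaD ⟨i, l⟩ ⟨j, m⟩)
        = (r j : ℤ) * g i j := by
      have h4 := h1.symm.trans h2
      linarith
    have h5 := mul_left_cancel₀ (hrne j) h3
    linarith
  have hBkk : T.1 k k = 0 := hskew.diag k
  obtain ⟨hB', hC', hG'⟩ := block_main r (B₀ := B₀) (B := T.1) (u := u) (g := g) (σ := σ)
    (k := k) (S := S) hB hCe hGe hBkk
  have hsa : ∀ j, sigmaSign (w ++ [k]) j = (if j = k then (-1 : ℤ) else 1) * σ j := by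
    intro j
    rw [hσdef]
    exact sigmaSign_append w k j
  have hgp := genPat_append r B₀ w k
  have hhp := hatPat_append_block r B₀ w k
  have hkey := key (r k) (hr k) (σ k) (u k k) (hσpm k)
  refine ⟨?_, ?_, ?_, ?_⟩
  · rw [hgp]
    exact hskew.genMut r k
  · intro d e
    rw [hgp, hhp]
    exact hB' d e
  · intro i j l m
    rw [hgp, hhp, hC' i j l m, hsa j]
    have hgs : (genStep r B₀ T k).2.1 i j
        = (if j = k then -(T.2.1 i k)
           else T.2.1 i j + (r k : ℤ) * (T.2.1 i k * intPos (T.1 k j)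
             + intPos (-(T.2.1 i k)) * T.1 k j)) := rfl
    rw [hgs]
    by_cases hj : j = k
    · rw [if_pos hj, if_pos hj, if_pos hj, hCg i k]
      have hsj : σ j = σ k := by rw [hj]
      have hδ : (if i = j then (1 : ℤ) else 0) = (if i = k then 1 else 0) := by rw [hj]
      rw [hsj, hδ]
      ring
    · rw [if_neg hj, if_neg hj, if_neg hj, one_mul, hCg i j]
      by_cases hi : i = k
      · have hcik : T.2.1 i k = (r k : ℤ) * u k k + σ k := by
          rw [hCg i k, if_pos hi]
          have h1 : (r i : ℤ) = r k := by rw [hi]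
          have h2 : u i k = u k k := by rw [hi]
          rw [h1, h2]
          ring
        have hδij : (if i = j then (1 : ℤ) else 0) = 0 := if_neg (fun h : i = j => hj (h ▸ hi))
        have hri : (r i : ℤ) = r k := by rw [hi]
        rw [if_pos hi, hcik, hδij, hri,
          show -((r k : ℤ) * u k k + σ k) = -((r k : ℤ) * u k k) - σ k from by ring,
          ← hkey]
        unfold fC
        ring
      · have hcik : T.2.1 i k = (r i : ℤ) * u i k := by
          rw [hCg i k, if_neg hi]
          ring
        rw [if_neg hi, hcik,
          show -((r i : ℤ) * u i k) = (r i : ℤ) * (-(u i k)) from by ring,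
          intPos_natmul]
        unfold fC
        ring
  · intro i j l m
    rw [hgp, hhp, hG' i j l m, hsa j]
    have hgs : (genStep r B₀ T k).2.2 i j
        = (if j = k then -(T.2.2 i k) + (r k : ℤ) * ∑ a : Fin n,
            (T.2.2 i a * intPos (-(T.1 a k)) - B₀ i a * intPos (-(T.2.1 a k)))
           else T.2.2 i j) := rfl
    rw [hgs]
    by_cases hj : j = k
    · rw [if_pos hj, if_pos hj, if_pos hj]
      have hsj : σ j = σ k := by rw [hj]
      have hδ : (if i = j then (1 : ℤ) else 0) = (if i = k then 1 else 0) := by rw [hj]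
      have hrj : (r j : ℤ) = r k := by rw [hj]
      have hSum : (∑ a : Fin n, (T.2.2 i a * intPos (-(T.1 a k))
          - B₀ i a * intPos (-(T.2.1 a k)))) = Xterm r B₀ T.1 u g σ k i := by
        have hstep : ∀ a : Fin n, (T.2.2 i a * intPos (-(T.1 a k))
            - B₀ i a * intPos (-(T.2.1 a k)))
            = if a = k then
                -(B₀ i k) * (((r k : ℤ) - 1) * intPos (-(u k k)) + intPos (-(u k k) - σ k))
              else (r a : ℤ) * (g i a * intPos (-(T.1 a k)) - B₀ i a * intPos (-(u a k)))
                + σ a * (if i = a then 1 else 0) * intPos (-(T.1 a k)) := by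
          intro a
          by_cases ha : a = k
          · subst ha
            rw [if_pos rfl, hBkk, hCg a a,
              show (if a = a then (1 : ℤ) else 0) = 1 from if_pos rfl,
              show -((r a : ℤ) * u a a + σ a * 1) = -((r a : ℤ) * u a a) - σ a from by ring,
              ← key (r a) (hr a) (σ a) (u a a) (hσpm a)]
            simp only [neg_zero]
            rw [show intPos 0 = 0 from rfl]
            ring
          · rw [if_neg ha, hGg i a, hCg a k,
              show (if a = k then (1 : ℤ) else 0) = 0 from if_neg ha,
              show -((r a : ℤ) * u a k + σ k * 0) = (r a : ℤ) * (-(u a k)) from by ring,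
              intPos_natmul]
            ring
        rw [Finset.sum_congr rfl fun a _ => hstep a, sum_split_at]
        unfold Xterm
        ring
      rw [hSum, hGg i k, hsj, hδ, hrj]
      ring
    · rw [if_neg hj, if_neg hj, if_neg hj, one_mul, hGg i j]
      ring

lemma inv_all (hr : ∀ i, 1 ≤ r i) (dv : Fin n → ℚ) (hskew : SkewOK dv B₀)
    (w : List (Fin n)) : Inv r B₀ dv w := by
  induction w using List.reverseRecOn with
  | nil => exact inv_nil r B₀ dv hskew
  | append_singleton w k ih => exact inv_step r B₀ hr dv w k ih

end GgAux

/-- Relations between the generalized `G`-matrix `G^g(w)` and the composite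
`G`-matrix `G^c(w)`. -/
theorem Gg_eq_block_sums_of_Gc {n : ℕ} (hn : 1 ≤ n) (r : Fin n → ℕ)
    (hr : ∀ i, 1 ≤ r i) (B₀ : Matrix (Fin n) (Fin n) ℤ)
    (hskew : ∃ d : Fin n → ℚ, (∀ i, 0 < d i) ∧
      ∀ i j, d i * (B₀ i j : ℚ) = -(d j * (B₀ j i : ℚ)))
    (w : List (Fin n)) (i j : Fin n) (l₀ : Fin (r i)) (m₀ : Fin (r j)) :
    (genPat r B₀ w).2.2 i j = ∑ m : Fin (r j), Gc r B₀ w ⟨i, l₀⟩ ⟨j, m⟩ ∧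
    (r i : ℤ) * (genPat r B₀ w).2.2 i j
      = (r j : ℤ) * ∑ l : Fin (r i), Gc r B₀ w ⟨i, l⟩ ⟨j, m₀⟩ ∧
    (genPat r B₀ w).2.2 i j
      = (r j : ℤ) * (Gc r B₀ w ⟨i, l₀⟩ ⟨j, m₀⟩ - sigmaSign w j * deltaD ⟨i, l₀⟩ ⟨j, m₀⟩)
        + sigmaSign w j * (if i = j then 1 else 0) := by
  obtain ⟨dv, hdpos, hdskew⟩ := hskew
  obtain ⟨-, -, -, hGrel0⟩ := GgAux.inv_all r B₀ hr dv ⟨hdpos, hdskew⟩ w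
  have hGrel : ∀ (i j : Fin n) (l : Fin (r i)) (m : Fin (r j)),
      (genPat r B₀ w).2.2 i j = (r j : ℤ) * (Gc r B₀ w ⟨i, l⟩ ⟨j, m⟩
        - sigmaSign w j * deltaD ⟨i, l⟩ ⟨j, m⟩)
        + sigmaSign w j * (if i = j then 1 else 0) :=
    fun i j l m => hGrel0 i j l m
  have hrjne : ((r j : ℤ)) ≠ 0 := Int.natCast_ne_zero.mpr (by have := hr j; omega)
  have hent : ∀ (l : Fin (r i)) (m : Fin (r j)),
      Gc r B₀ w ⟨i, l⟩ ⟨j, m⟩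
        = (Gc r B₀ w ⟨i, l₀⟩ ⟨j, m₀⟩ - sigmaSign w j * deltaD ⟨i, l₀⟩ ⟨j, m₀⟩)
          + sigmaSign w j * deltaD ⟨i, l⟩ ⟨j, m⟩ := by
    intro l m
    have h1 := hGrel i j l m
    have h2 := hGrel i j l₀ m₀
    have h3 : (r j : ℤ) * (Gc r B₀ w ⟨i, l⟩ ⟨j, m⟩
          - sigmaSign w j * deltaD ⟨i, l⟩ ⟨j, m⟩)
        = (r j : ℤ) * (Gc r B₀ w ⟨i, l₀⟩ ⟨j, m₀⟩
          - sigmaSign w j * deltaD ⟨i, l₀⟩ ⟨j, m₀⟩) := by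
      have h4 := h1.symm.trans h2
      linarith
    have h5 := mul_left_cancel₀ hrjne h3
    linarith
  refine ⟨?_, ?_, hGrel i j l₀ m₀⟩
  · have hsum : (∑ m : Fin (r j), Gc r B₀ w ⟨i, l₀⟩ ⟨j, m⟩)
        = (r j : ℤ) * (Gc r B₀ w ⟨i, l₀⟩ ⟨j, m₀⟩
            - sigmaSign w j * deltaD ⟨i, l₀⟩ ⟨j, m₀⟩)
          + sigmaSign w j * (if i = j then 1 else 0) := by
      rw [Finset.sum_congr rfl fun m _ => hent l₀ m, Finset.sum_add_distrib,
        Finset.sum_const, ← Finset.mul_sum, GgAux.deltaD_sum, Finset.card_univ,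
        Fintype.card_fin, nsmul_eq_mul]
    exact (hGrel i j l₀ m₀).trans hsum.symm
  · have hsum2 : (∑ l : Fin (r i), Gc r B₀ w ⟨i, l⟩ ⟨j, m₀⟩)
        = (r i : ℤ) * (Gc r B₀ w ⟨i, l₀⟩ ⟨j, m₀⟩
            - sigmaSign w j * deltaD ⟨i, l₀⟩ ⟨j, m₀⟩)
          + sigmaSign w j * (if i = j then 1 else 0) := by
      rw [Finset.sum_congr rfl fun l _ => hent l m₀, Finset.sum_add_distrib,
        Finset.sum_const, ← Finset.mul_sum, GgAux.deltaD_sum', Finset.card_univ,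
        Fintype.card_fin, nsmul_eq_mul]
    rw [hGrel i j l₀ m₀, hsum2]
    by_cases hij : i = j
    · have hrij : (r i : ℤ) = r j := by rw [hij]
      rw [hrij]
    · rw [if_neg hij]
      ring
end
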